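/- Let V be a normed real vector space, δ : V × V → V any function, and T : L¹([0,1];ℝ) → V a continuous linear map satisfying T(γ(f,g)) = δ(T(f), T(g)) for all f, g ∈ L¹([0,1];ℝ). Then T = 0 if and only if T(𝟙) = 0. -/

import Mathlib

open MeasureTheory

/-- Lebesgue measure restricted to `[0,1]`. -/
noncomputable def μ01 : Measure ℝ := volume.restrict (Set.Icc 0 1)

/-- The space `L¹([0,1]; ℝ)`. -/
abbrev L1 : Type := Lp ℝ 1 μ01

/-- `γ : L1 → L1 → L1` is the juxtaposition operation: `γ f g` agrees a.e. with
`x ↦ f (2x)` on `[0, 1/2)` and with `x ↦ g (2x − 1)` on `[1/2, 1]`. -/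
def IsJux (γ : L1 → L1 → L1) : Prop :=
  ∀ f g : L1,
    (∀ᵐ x ∂μ01, x ∈ Set.Ico (0 : ℝ) (1 / 2) → γ f g x = f (2 * x)) ∧
    (∀ᵐ x ∂μ01, x ∈ Set.Icc (1 / 2 : ℝ) 1 → γ f g x = g (2 * x - 1))

/-- `one : L1` is the class of the constant function `1`. -/
def IsOne (one : L1) : Prop := (one : ℝ → ℝ) =ᵐ[μ01] fun _ => (1 : ℝ)

/-! The kernel of `T` is a closed subspace containing `𝟙`, and since `δ (0, 0) = T (γ 0 0) = 0`
it is stable under `f ↦ γ f 0` and `f ↦ γ 𝟙 f`. These maps send the indicator of `[0, t)` to the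
indicators of `[0, t/2)` and `[0, (t+1)/2)`, so the kernel contains the indicators of `[0, t)` for
every dyadic `t ∈ [0, 1]`, hence for every real `t` by continuity in `t`. The half-lines `(-∞, t)`
form a π-system generating the Borel sets, so a Dynkin argument puts every indicator of a
measurable set in the kernel, and these span a dense subspace of `L¹`. -/

open Set Filter Topology
open scoped symmDiff ENNReal

namespace MeasureTheory

variable {α E 𝕜 : Type*} [MeasurableSpace α] {μ : Measure α} [NormedAddCommGroup E] {p : ℝ≥0∞}

theorem indicatorConstLp_smul [NormedRing 𝕜] [Module 𝕜 E] [IsBoundedSMul 𝕜 E] {s : Set α}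
    (hs : MeasurableSet s) (hμs : μ s ≠ ∞) (c : 𝕜) (x : E) :
    indicatorConstLp p hs hμs (c • x) = c • indicatorConstLp p hs hμs x := by
  refine Lp.ext ?_
  filter_upwards [indicatorConstLp_coeFn (c := c • x),
    Lp.coeFn_smul c (indicatorConstLp p hs hμs x), indicatorConstLp_coeFn (c := x)] with y h1 h2 h3
  rw [h1, h2, Pi.smul_apply, h3]
  by_cases hy : y ∈ s <;> simp [hy]

theorem Lp.indicatorConstLp_mem_of_isPiSystem [IsFiniteMeasure μ] [Fact (1 ≤ p)] (hp : p ≠ ∞)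
    {K : AddSubgroup (Lp E p μ)} (hK : IsClosed (K : Set (Lp E p μ))) {C : Set (Set α)}
    (hgen : ‹MeasurableSpace α› = MeasurableSpace.generateFrom C) (hC : IsPiSystem C) (c : E)
    (huniv : indicatorConstLp p .univ (measure_ne_top μ _) c ∈ K)
    (hCK : ∀ s (hs : MeasurableSet s), s ∈ C → indicatorConstLp p hs (measure_ne_top μ s) c ∈ K)
    {s : Set α} (hs : MeasurableSet s) : indicatorConstLp p hs (measure_ne_top μ s) c ∈ K := by
  induction s, hs using MeasurableSpace.induction_on_inter hgen hC with
  | empty => simp [K.zero_mem]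
  | basic s hs => exact hCK s _ hs
  | compl s hs hsK =>
    have hsplit := indicatorConstLp_disjoint_union (p := p) hs hs.compl (measure_ne_top μ _)
      (measure_ne_top μ _) disjoint_compl_right c
    simp only [union_compl_self] at hsplit
    rw [← add_sub_cancel_left (indicatorConstLp p hs (measure_ne_top μ s) c)
      (indicatorConstLp p hs.compl _ c), ← hsplit]
    exact K.sub_mem huniv hsK
  | iUnion f hdisj hf hfK =>
    have hacc : ∀ n, MeasurableSet (accumulate f n) := fun n =>
      .biUnion (to_countable _) fun i _ => hf i
    have haccK : ∀ n, indicatorConstLp p (hacc n) (measure_ne_top μ _) c ∈ K := by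
      intro n
      induction n with
      | zero => simpa [accumulate] using hfK 0
      | succ n ih =>
        have hsplit := indicatorConstLp_disjoint_union (p := p) (hacc n) (hf (n + 1))
          (measure_ne_top μ _) (measure_ne_top μ _) (disjoint_accumulate hdisj n.lt_succ_self) c
        simp only [← accumulate_succ] at hsplit
        rw [hsplit]
        exact K.add_mem ih (hfK _)
    refine hK.mem_of_tendsto (tendsto_indicatorConstLp_set (l := atTop) hp ?_)
      (Eventually.of_forall haccK)
    have hdiff : ∀ n, μ (accumulate f n ∆ ⋃ i, f i) = μ (⋃ i, f i) - μ (accumulate f n) :=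
      fun n => by
      rw [symmDiff_of_le (accumulate_subset_iUnion n),
        measure_sdiff (accumulate_subset_iUnion n) (hacc n).nullMeasurableSet (measure_ne_top μ _)]
    have hlim := ENNReal.Tendsto.sub (tendsto_const_nhds (x := μ (⋃ i, f i)))
      (tendsto_measure_iUnion_accumulate (μ := μ) (f := f)) (.inl (measure_ne_top μ _))
    simpa only [hdiff, tsub_self] using hlim

theorem Lp.submodule_eq_top_of_indicatorConstLp_mem [Fact (1 ≤ p)] (hp : p ≠ ∞)
    {K : Submodule ℝ (Lp ℝ p μ)} (hK : IsClosed (K : Set (Lp ℝ p μ)))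
    (hind : ∀ s (hs : MeasurableSet s) (hμs : μ s ≠ ∞), indicatorConstLp p hs hμs (1 : ℝ) ∈ K) :
    K = ⊤ := by
  refine Submodule.eq_top_iff'.mpr fun f => ?_
  induction f using Lp.induction hp with
  | indicatorConst c hs hμs =>
    rw [Lp.simpleFunc.coe_indicatorConst, ← mul_one c, ← smul_eq_mul, indicatorConstLp_smul]
    exact K.smul_mem c (hind _ hs hμs.ne)
  | add _ _ _ hf hg => exact K.add_mem hf hg
  | isClosed => exact hK

end MeasureTheory

theorem div_two_pow_mem_of_halves {S : Set ℝ} (h0 : (0 : ℝ) ∈ S) (h1 : (1 : ℝ) ∈ S)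
    (hleft : ∀ t ∈ Icc (0 : ℝ) 1, t ∈ S → t / 2 ∈ S)
    (hright : ∀ t ∈ Icc (0 : ℝ) 1, t ∈ S → (t + 1) / 2 ∈ S) (n k : ℕ) (hk : k ≤ 2 ^ n) :
    (k : ℝ) / 2 ^ n ∈ S := by
  induction n generalizing k with
  | zero => interval_cases k <;> simpa
  | succ n ih =>
    have hIcc : ∀ j : ℕ, j ≤ 2 ^ n → (j : ℝ) / 2 ^ n ∈ Icc (0 : ℝ) 1 := fun j hj =>
      ⟨by positivity, div_le_one_of_le₀ (by exact_mod_cast hj) (by positivity)⟩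
    rcases le_or_gt k (2 ^ n) with hk' | hk'
    · convert hleft _ (hIcc k hk') (ih k hk') using 1
      rw [pow_succ]; ring
    · obtain ⟨j, rfl⟩ := Nat.exists_eq_add_of_le hk'.le
      have hj : j ≤ 2 ^ n := by rw [pow_succ] at hk; omega
      convert hright _ (hIcc j hj) (ih j hj) using 1
      push_cast; field_simp; ring

theorem Icc_subset_of_isClosed_of_halves {S : Set ℝ} (hS : IsClosed S) (h0 : (0 : ℝ) ∈ S)
    (h1 : (1 : ℝ) ∈ S) (hleft : ∀ t ∈ Icc (0 : ℝ) 1, t ∈ S → t / 2 ∈ S)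
    (hright : ∀ t ∈ Icc (0 : ℝ) 1, t ∈ S → (t + 1) / 2 ∈ S) : Icc 0 1 ⊆ S := by
  intro t ht
  have hlim : Tendsto (fun n : ℕ => (⌊t * 2 ^ n⌋₊ : ℝ) / 2 ^ n) atTop (𝓝 t) :=
    (tendsto_nat_floor_mul_div_atTop ht.1).comp (tendsto_pow_atTop_atTop_of_one_lt one_lt_two)
  refine hS.mem_of_tendsto hlim (Eventually.of_forall fun n => ?_)
  refine div_two_pow_mem_of_halves h0 h1 hleft hright n _ (Nat.floor_le_of_le ?_)
  push_cast
  exact mul_le_of_le_one_left (by positivity) ht.2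

instance : IsFiniteMeasure μ01 := by
  unfold μ01; infer_instance

theorem ae_mem_Ico_μ01 : ∀ᵐ x ∂μ01, x ∈ Ico (0 : ℝ) 1 := by
  rw [μ01, ← Measure.restrict_congr_set Ico_ae_eq_Icc]
  exact ae_restrict_mem measurableSet_Ico

theorem ae_comp_eq_of_ae_eq_μ01 {f F : ℝ → ℝ} (hf : f =ᵐ[μ01] F) {φ : ℝ → ℝ}
    (hφ : Measure.QuasiMeasurePreserving φ) :
    ∀ᵐ x ∂μ01, φ x ∈ Icc (0 : ℝ) 1 → f (φ x) = F (φ x) :=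
  ae_restrict_of_ae (hφ.ae ((ae_restrict_iff' measurableSet_Icc).mp hf))

noncomputable def indIio (t : ℝ) : L1 :=
  indicatorConstLp 1 measurableSet_Iio (measure_ne_top μ01 (Iio t)) 1

theorem lipschitzWith_indIio : LipschitzWith 1 indIio := by
  refine LipschitzWith.of_dist_le_mul fun s t => ?_
  wlog hst : s ≤ t generalizing s t
  · rw [dist_comm, dist_comm s]; exact this t s (le_of_not_ge hst)
  have hsymm : Iio s ∆ Iio t = Ico s t := by
    rw [symmDiff_of_le (Iio_subset_Iio hst)]
    ext x; simp
  have hμ : μ01 (Iio s ∆ Iio t) ≤ ENNReal.ofReal (t - s) := by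
    rw [hsymm, ← Real.volume_Ico]; exact Measure.restrict_le_self _
  rw [indIio, indIio, dist_indicatorConstLp_eq_norm,
    norm_indicatorConstLp one_ne_zero ENNReal.one_ne_top]
  simp only [norm_one, ENNReal.toReal_one, div_one, Real.rpow_one, one_mul, NNReal.coe_one,
    Real.dist_eq, abs_sub_comm s t, abs_of_nonneg (sub_nonneg.mpr hst)]
  exact ENNReal.toReal_le_of_le_ofReal (sub_nonneg.mpr hst) hμ

theorem indIio_of_nonpos {t : ℝ} (ht : t ≤ 0) : indIio t = 0 := by
  refine Lp.ext (indicatorConstLp_coeFn.trans ?_ |>.trans (Lp.coeFn_zero _ _ _).symm)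
  filter_upwards [ae_mem_Ico_μ01] with x hx
  simp [indicator_of_notMem (show x ∉ Iio t from not_lt.mpr (ht.trans hx.1))]

theorem indIio_of_one_le {one : L1} (hone : IsOne one) {t : ℝ} (ht : 1 ≤ t) :
    indIio t = one := by
  refine Lp.ext (indicatorConstLp_coeFn.trans ?_ |>.trans hone.symm)
  filter_upwards [ae_mem_Ico_μ01] with x hx
  simp [indicator_of_mem (show x ∈ Iio t from hx.2.trans_le ht)]

namespace IsJux

variable {γ : L1 → L1 → L1}

theorem ae_eq_piecewise (hγ : IsJux γ) {f g : L1} {F G : ℝ → ℝ} (hF : f =ᵐ[μ01] F)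
    (hG : g =ᵐ[μ01] G) :
    γ f g =ᵐ[μ01] fun x => if x < 1 / 2 then F (2 * x) else G (2 * x - 1) := by
  have hφ : Measure.QuasiMeasurePreserving (fun x : ℝ => 2 * x) :=
    Measure.quasiMeasurePreserving_smul volume two_ne_zero
  have hψ : Measure.QuasiMeasurePreserving (fun x : ℝ => 2 * x - 1) :=
    (measurePreserving_sub_right volume 1).quasiMeasurePreserving.comp hφ
  obtain ⟨hleft, hright⟩ := hγ f g
  filter_upwards [hleft, hright, ae_comp_eq_of_ae_eq_μ01 hF hφ, ae_comp_eq_of_ae_eq_μ01 hG hψ,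
    ae_mem_Ico_μ01] with x hl hr hF' hG' hx
  split_ifs with hx2
  · rw [hl ⟨hx.1, hx2⟩, hF' ⟨by linarith [hx.1], by linarith⟩]
  · rw [hr ⟨not_lt.mp hx2, hx.2.le⟩, hG' ⟨by linarith, by linarith [hx.2]⟩]

theorem zero_zero (hγ : IsJux γ) : γ 0 0 = 0 := by
  have h0 := Lp.coeFn_zero ℝ 1 μ01
  refine Lp.ext ((hγ.ae_eq_piecewise h0 h0).trans ?_ |>.trans h0.symm)
  filter_upwards with x
  simp

theorem indIio_zero (hγ : IsJux γ) {t : ℝ} (ht : t ≤ 1) : γ (indIio t) 0 = indIio (t / 2) := by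
  refine Lp.ext ((hγ.ae_eq_piecewise indicatorConstLp_coeFn (Lp.coeFn_zero ℝ 1 μ01)).trans ?_
    |>.trans indicatorConstLp_coeFn.symm)
  filter_upwards with x
  by_cases hx : x < 1 / 2
  · have hiff : 2 * x < t ↔ x < t / 2 := by constructor <;> intro <;> linarith
    simp only [if_pos hx, indicator_apply, mem_Iio, hiff]
  · simp only [if_neg hx, indicator_apply, mem_Iio]
    rw [if_neg (by linarith)]; rfl

theorem one_indIio (hγ : IsJux γ) {one : L1} (hone : IsOne one) {t : ℝ} (ht : 0 ≤ t) :
    γ one (indIio t) = indIio ((t + 1) / 2) := by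
  refine Lp.ext ((hγ.ae_eq_piecewise hone indicatorConstLp_coeFn).trans ?_
    |>.trans indicatorConstLp_coeFn.symm)
  filter_upwards with x
  by_cases hx : x < 1 / 2
  · simp only [if_pos hx, indicator_apply, mem_Iio]
    rw [if_pos (by linarith)]
  · have hiff : 2 * x - 1 < t ↔ x < (t + 1) / 2 := by constructor <;> intro <;> linarith
    simp only [if_neg hx, indicator_apply, mem_Iio, hiff]

theorem submodule_eq_top (hγ : IsJux γ) {one : L1} (hone : IsOne one)
    {K : Submodule ℝ L1} (hK : IsClosed (K : Set L1)) (h1 : one ∈ K)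
    (hleft : ∀ f ∈ K, γ f 0 ∈ K) (hright : ∀ f ∈ K, γ one f ∈ K) : K = ⊤ := by
  have hIcc : Icc 0 1 ⊆ indIio ⁻¹' K := by
    refine Icc_subset_of_isClosed_of_halves (hK.preimage lipschitzWith_indIio.continuous) ?_ ?_
      (fun t ht htK => ?_) (fun t ht htK => ?_)
    · simp [indIio_of_nonpos le_rfl, K.zero_mem]
    · simpa [indIio_of_one_le hone le_rfl] using h1
    · rw [mem_preimage, ← hγ.indIio_zero ht.2]; exact hleft _ htK
    · rw [mem_preimage, ← hγ.one_indIio hone ht.1]; exact hright _ htK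
  have hIio : ∀ t, indIio t ∈ K := by
    intro t
    rcases le_total t 0 with ht0 | ht0
    · rw [indIio_of_nonpos ht0]; exact K.zero_mem
    rcases le_total 1 t with ht1 | ht1
    · rw [indIio_of_one_le hone ht1]; exact h1
    exact hIcc ⟨ht0, ht1⟩
  have huniv : indicatorConstLp 1 MeasurableSet.univ (measure_ne_top μ01 _) (1 : ℝ) = one := by
    rw [indicatorConstLp_univ]
    exact Lp.ext ((Lp.coeFn_const _ _ _).trans hone.symm)
  refine Lp.submodule_eq_top_of_indicatorConstLp_mem ENNReal.one_ne_top hK fun s hs _ => ?_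
  refine Lp.indicatorConstLp_mem_of_isPiSystem (K := K.toAddSubgroup) ENNReal.one_ne_top hK
    (BorelSpace.measurable_eq.trans (borel_eq_generateFrom_Iio ℝ)) isPiSystem_Iio 1
    (huniv ▸ h1) ?_ hs
  rintro _ _ ⟨t, rfl⟩
  exact hIio t

end IsJux

/-- a continuous linear map `T` out of `L¹([0,1];ℝ)` intertwining
the juxtaposition `γ` with some operation `δ` is zero iff `T 𝟙 = 0`. -/
theorem stmt_7 {V : Type*} [NormedAddCommGroup V] [NormedSpace ℝ V]
    (δ : V × V → V)
    (γ : L1 → L1 → L1) (hγ : IsJux γ)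
    (one : L1) (hone : IsOne one)
    (T : L1 →L[ℝ] V)
    (hT : ∀ f g : L1, T (γ f g) = δ (T f, T g)) :
    T = 0 ↔ T one = 0 := by
  refine ⟨fun h => h ▸ rfl, fun h1 => ?_⟩
  have hδ : δ (0, 0) = 0 := by simpa [hγ.zero_zero] using (hT 0 0).symm
  have hker : LinearMap.ker (T : L1 →ₗ[ℝ] V) = ⊤ := by
    refine hγ.submodule_eq_top hone T.isClosed_ker h1 (fun f hf => ?_) (fun f hf => ?_) <;>
      simp only [LinearMap.mem_ker, ContinuousLinearMap.coe_coe] at hf ⊢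
    · rw [hT, hf, map_zero, hδ]
    · rw [hT, h1, hf, hδ]
  exact ContinuousLinearMap.coe_injective (LinearMap.ker_eq_top.mp hker)
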